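/- arXiv:2303.03650 — 2 statements merged into one kernel-verified Lean document; each statement's English description precedes it below -/
import Mathlib

section
/- f*-projection under the α-divergence: Let α ∈ ℝ∖{0,1} and L ∈ ℒ⁺. Then the map ℒ⁺(π) ∋ M ↦ D_α(L||M) attains a unique minimum at the power mean reversiblization P_α(L); that is, D_α(L||P_α(L)) ≤ D_α(L||M) for all M ∈ ℒ⁺(π), with equality if and only if M = P_α(L). Explicitly, the minimizer has off-diagonal entries ((L(x,y)^α + L_π(x,y)^α)/2)^{1/α}. -/
open Finset

noncomputable section

variable {X : Type*} [Fintype X] [DecidableEq X]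

/-- Build a matrix with prescribed off-diagonal entries and diagonal entries
chosen so that every row sums to zero. -/
def rowZero (F : X → X → ℝ) : X → X → ℝ :=
  fun x y => if x = y then -(∑ z ∈ Finset.univ.erase x, F x z) else F x y

/-- `L` is a Markov infinitesimal generator: nonnegative off-diagonal entries
and zero row sums. -/
def IsGen (L : X → X → ℝ) : Prop :=
  (∀ x y, x ≠ y → 0 ≤ L x y) ∧ (∀ x, ∑ y, L x y = 0)

/-- `L` is a `π`-reversible Markov generator, i.e. `L ∈ ℒ(π)`. -/
def IsRev (π : X → ℝ) (L : X → X → ℝ) : Prop :=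
  IsGen L ∧ ∀ x y, π x * L x y = π y * L y x

/-- `π` is a probability distribution with full support. -/
def IsProb (π : X → ℝ) : Prop := (∀ x, 0 < π x) ∧ ∑ x, π x = 1

/-- The `π`-dual `L_π` of `L`: off-diagonal entries `π(y)L(y,x)/π(x)`,
diagonal entries make row sums zero. -/
def dual (π : X → ℝ) (L : X → X → ℝ) : X → X → ℝ :=
  rowZero (fun x y => π y * L y x / π x)

/-- The `f`-divergence between generators: `Df f π M L = D_f(M‖L)`.
(The convention `0·f(a/0) = 0` holds automatically since `a/0 = 0` and
the factor `L x y = 0` kills the term.) -/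
def Df (f : ℝ → ℝ) (π : X → ℝ) (M L : X → X → ℝ) : ℝ :=
  ∑ x, π x * ∑ y ∈ Finset.univ.erase x, L x y * f (M x y / L x y)

/-- Generator of the `α`-divergence: `f_α(t) = (t^α − αt − (1−α))/(α(α−1))`. -/
def falpha (α : ℝ) : ℝ → ℝ :=
  fun t => (t ^ α - α * t - (1 - α)) / (α * (α - 1))

/-- The power mean reversiblization `P_p(L)`: off-diagonal entries
`((L(x,y)^p + L_π(x,y)^p)/2)^{1/p}` (set to `0` when `p < 0` and
`L(x,y)·L_π(x,y) = 0`), diagonal entries make row sums zero. -/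
def pmean (p : ℝ) (π : X → ℝ) (L : X → X → ℝ) : X → X → ℝ :=
  rowZero (fun x y =>
    if p < 0 ∧ L x y * dual π L x y = 0 then 0
    else ((L x y ^ p + dual π L x y ^ p) / 2) ^ (1 / p))

/-! ### Auxiliary lemmas -/

lemma falpha_one' (β : ℝ) : falpha β 1 = 0 := by
  simp [falpha]

lemma falpha_pos' {β t : ℝ} (hβ0 : β ≠ 0) (hβ1 : β ≠ 1) (ht : 0 < t) (ht1 : t ≠ 1) :
    0 < falpha β t := by
  unfold falpha
  have hlog : Real.log t < t - 1 := Real.log_lt_sub_one_of_pos ht ht1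
  rcases lt_trichotomy β 0 with hβ | hβ | hβ
  · have h1 : 1 + β * Real.log t < t ^ β := by
      rw [Real.rpow_def_of_pos ht]
      have := Real.add_one_lt_exp (x := Real.log t * β)
        (mul_ne_zero (Real.log_ne_zero_of_pos_of_ne_one ht ht1) hβ0)
      rw [mul_comm (Real.log t) β] at this ⊢
      linarith
    have h2 : β * (t - 1) ≤ β * Real.log t :=
      mul_le_mul_of_nonpos_left hlog.le hβ.le
    have hnum : 0 < t ^ β - β * t - (1 - β) := by nlinarith
    exact div_pos hnum (mul_pos_of_neg_of_neg hβ (by linarith))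
  · exact absurd hβ hβ0
  · rcases lt_trichotomy β 1 with hβ1' | h | hβ1'
    · have h1 : (1 + (t - 1)) ^ β < 1 + β * (t - 1) :=
        rpow_one_add_lt_one_add_mul_self (by linarith) (by intro h; apply ht1; linarith) hβ hβ1'
      have hnum : t ^ β - β * t - (1 - β) < 0 := by
        have he : (1 : ℝ) + (t - 1) = t := by ring
        rw [he] at h1; nlinarith
      have hden : β * (β - 1) < 0 := mul_neg_of_pos_of_neg hβ (by linarith)
      exact div_pos_of_neg_of_neg hnum hden
    · exact absurd h hβ1
    · have h1 : 1 + β * (t - 1) < (1 + (t - 1)) ^ β :=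
        one_add_mul_self_lt_rpow_one_add (by linarith) (by intro h; apply ht1; linarith) hβ1'
      have hnum : 0 < t ^ β - β * t - (1 - β) := by
        have he : (1 : ℝ) + (t - 1) = t := by ring
        rw [he] at h1; nlinarith
      exact div_pos hnum (mul_pos (by linarith) (by linarith))

lemma falpha_nonneg' {β t : ℝ} (hβ0 : β ≠ 0) (hβ1 : β ≠ 1) (ht : 0 < t) :
    0 ≤ falpha β t := by
  by_cases h : t = 1
  · rw [h, falpha_one']
  · exact (falpha_pos' hβ0 hβ1 ht h).le

lemma falpha_eq_zero' {β t : ℝ} (hβ0 : β ≠ 0) (hβ1 : β ≠ 1) (ht : 0 < t)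
    (h : falpha β t = 0) : t = 1 := by
  by_contra h1
  exact absurd h (falpha_pos' hβ0 hβ1 ht h1).ne'

lemma pair_id' {α a b m : ℝ} (hα0 : α ≠ 0) (hα1 : α ≠ 1)
    (ha : 0 < a) (hb : 0 < b) (hm : 0 < m) :
    (m * falpha α (a / m) + m * falpha α (b / m))
      - ((((a ^ α + b ^ α) / 2) ^ (1/α)) * falpha α (a / (((a ^ α + b ^ α) / 2) ^ (1/α)))
        + (((a ^ α + b ^ α) / 2) ^ (1/α)) * falpha α (b / (((a ^ α + b ^ α) / 2) ^ (1/α))))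
    = 2 * (((a ^ α + b ^ α) / 2) ^ (1/α))
        * falpha (1 - α) (m / (((a ^ α + b ^ α) / 2) ^ (1/α))) := by
  have hA : (0:ℝ) < a ^ α := Real.rpow_pos_of_pos ha α
  have hB : (0:ℝ) < b ^ α := Real.rpow_pos_of_pos hb α
  have hc : (0:ℝ) < (a ^ α + b ^ α) / 2 := by positivity
  set ms : ℝ := ((a ^ α + b ^ α) / 2) ^ (1/α) with hms_def
  have hms : 0 < ms := Real.rpow_pos_of_pos hc _
  have hR : ms ^ α = (a ^ α + b ^ α) / 2 := by
    rw [hms_def, ← Real.rpow_mul hc.le, one_div, inv_mul_cancel₀ hα0, Real.rpow_one]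
  have hP : (0:ℝ) < m ^ α := Real.rpow_pos_of_pos hm α
  have hQ : (0:ℝ) < m ^ (1 - α) := Real.rpow_pos_of_pos hm _
  have hS : (0:ℝ) < ms ^ (1 - α) := Real.rpow_pos_of_pos hms _
  have hRpos : (0:ℝ) < ms ^ α := Real.rpow_pos_of_pos hms α
  have hPQ : m ^ (1 - α) * m ^ α = m := by
    rw [← Real.rpow_add hm]; norm_num
  have hRS : ms ^ (1 - α) * ms ^ α = ms := by
    rw [← Real.rpow_add hms]; norm_num
  unfold falpha
  rw [Real.div_rpow ha.le hm.le, Real.div_rpow hb.le hm.le,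
    Real.div_rpow ha.le hms.le, Real.div_rpow hb.le hms.le,
    Real.div_rpow hm.le hms.le]
  generalize a ^ α = A at *
  generalize b ^ α = B at *
  generalize hPe : m ^ α = P at *
  generalize hQe : m ^ (1 - α) = Q at *
  generalize hRe : ms ^ α = R at *
  generalize hSe : ms ^ (1 - α) = S at *
  clear_value ms
  clear hms_def
  subst hPQ
  subst hRS
  subst hR
  have h1 : α - 1 ≠ 0 := sub_ne_zero.2 hα1
  have h2 : (1:ℝ) - α ≠ 0 := sub_ne_zero.2 (Ne.symm hα1)
  have h3 : P ≠ 0 := hP.ne'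
  have h4 : Q ≠ 0 := hQ.ne'
  have h5 : S ≠ 0 := hS.ne'
  have h6 : A + B ≠ 0 := by positivity
  field_simp
  ring_nf
  field_simp
  ring

lemma rowZero_offdiag (F : X → X → ℝ) {x y : X} (h : x ≠ y) : rowZero F x y = F x y :=
  if_neg h

lemma rowZero_sum (F : X → X → ℝ) (x : X) : ∑ y, rowZero F x y = 0 := by
  rw [← Finset.add_sum_erase Finset.univ _ (Finset.mem_univ x)]
  have h1 : rowZero F x x = -(∑ z ∈ Finset.univ.erase x, F x z) := if_pos rfl
  have h2 : ∑ y ∈ Finset.univ.erase x, rowZero F x y = ∑ y ∈ Finset.univ.erase x, F x y :=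
    Finset.sum_congr rfl fun y hy => if_neg (Finset.ne_of_mem_erase hy).symm
  rw [h1, h2]; ring

/-- **`f*`-projection under the `α`-divergence** (Theorem 3.3(2)):
for `L ∈ ℒ⁺`, the map `ℒ⁺(π) ∋ M ↦ D_α(L‖M)` attains a unique minimum at the
power mean reversiblization `P_α(L)`, whose off-diagonal entries are
`((L(x,y)^α + L_π(x,y)^α)/2)^{1/α}`. -/
theorem alpha_fstar_projection (π : X → ℝ) (hπ : IsProb π)
    (α : ℝ) (hα0 : α ≠ 0) (hα1 : α ≠ 1)
    (L : X → X → ℝ) (hL : IsGen L) (hLpos : ∀ x y, x ≠ y → 0 < L x y) :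
    (IsRev π (pmean α π L) ∧ ∀ x y, x ≠ y → 0 < pmean α π L x y) ∧
    (∀ M, IsRev π M → (∀ x y, x ≠ y → 0 < M x y) →
      Df (falpha α) π L (pmean α π L) ≤ Df (falpha α) π L M) ∧
    (∀ M, IsRev π M → (∀ x y, x ≠ y → 0 < M x y) →
      (Df (falpha α) π L M = Df (falpha α) π L (pmean α π L) ↔ M = pmean α π L)) ∧
    (∀ x y, x ≠ y →
      pmean α π L x y = ((L x y ^ α + dual π L x y ^ α) / 2) ^ (1 / α)) := by
  obtain ⟨hπpos, -⟩ := hπ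
  have hβ0 : (1:ℝ) - α ≠ 0 := sub_ne_zero.2 (Ne.symm hα1)
  have hβ1 : (1:ℝ) - α ≠ 1 := by intro h; apply hα0; linarith [sub_eq_iff_eq_add.mp h]
  -- dual off-diagonal entries
  have hdual : ∀ x y : X, x ≠ y → dual π L x y = π y * L y x / π x := fun x y h =>
    rowZero_offdiag _ h
  have hdualpos : ∀ x y : X, x ≠ y → 0 < dual π L x y := by
    intro x y h
    rw [hdual x y h]
    exact div_pos (mul_pos (hπpos y) (hLpos y x h.symm)) (hπpos x)
  -- part 4 : the off-diagonal formula
  have hoff : ∀ x y : X, x ≠ y →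
      pmean α π L x y = ((L x y ^ α + dual π L x y ^ α) / 2) ^ (1 / α) := by
    intro x y h
    have h0 : L x y * dual π L x y ≠ 0 :=
      (mul_pos (hLpos x y h) (hdualpos x y h)).ne'
    unfold pmean
    rw [rowZero_offdiag _ h, if_neg (by tauto)]
  -- positivity of pmean off-diagonal
  have hPpos : ∀ x y : X, x ≠ y → 0 < pmean α π L x y := by
    intro x y h
    rw [hoff x y h]
    have h1 : 0 < L x y ^ α := Real.rpow_pos_of_pos (hLpos x y h) α
    have h2 : 0 < dual π L x y ^ α := Real.rpow_pos_of_pos (hdualpos x y h) α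
    exact Real.rpow_pos_of_pos (by positivity) _
  -- the key multiplicative formula : π x * pmean x y = K x y
  have hKP : ∀ x y : X, x ≠ y → π x * pmean α π L x y
      = (((π x * L x y) ^ α + (π y * L y x) ^ α) / 2) ^ (1 / α) := by
    intro x y h
    rw [hoff x y h, hdual x y h]
    have hx := hπpos x
    have hLa := hLpos x y h
    have hd : 0 < π y * L y x / π x := div_pos (mul_pos (hπpos y) (hLpos y x h.symm)) hx
    have hbase : (0:ℝ) < (L x y ^ α + (π y * L y x / π x) ^ α) / 2 := by
      have := Real.rpow_pos_of_pos hLa α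
      have := Real.rpow_pos_of_pos hd α
      positivity
    have e1 : π x = (π x ^ α) ^ (1/α) := by
      rw [← Real.rpow_mul hx.le, mul_one_div_cancel hα0, Real.rpow_one]
    calc π x * ((L x y ^ α + (π y * L y x / π x) ^ α) / 2) ^ (1/α)
        = (π x ^ α) ^ (1/α) * ((L x y ^ α + (π y * L y x / π x) ^ α) / 2) ^ (1/α) := by
          rw [← e1]
      _ = (π x ^ α * ((L x y ^ α + (π y * L y x / π x) ^ α) / 2)) ^ (1/α) := by
          rw [← Real.mul_rpow (Real.rpow_pos_of_pos hx α).le hbase.le]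
      _ = (((π x * L x y) ^ α + (π y * L y x) ^ α) / 2) ^ (1/α) := by
          congr 1
          have e2 : π y * L y x = π x * (π y * L y x / π x) := by field_simp
          have e3 : (π y * L y x) ^ α = π x ^ α * (π y * L y x / π x) ^ α := by
            rw [← Real.mul_rpow hx.le hd.le, ← e2]
          rw [Real.mul_rpow hx.le hLa.le, e3]
          ring
  have hKsymm : ∀ x y : X,
      (((π x * L x y) ^ α + (π y * L y x) ^ α) / 2) ^ (1 / α)
      = (((π y * L y x) ^ α + (π x * L x y) ^ α) / 2) ^ (1 / α) := by
    intro x y; rw [add_comm]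
  have hKpos : ∀ x y : X, x ≠ y →
      0 < (((π x * L x y) ^ α + (π y * L y x) ^ α) / 2) ^ (1 / α) := by
    intro x y h
    have h1 : 0 < (π x * L x y) ^ α :=
      Real.rpow_pos_of_pos (mul_pos (hπpos x) (hLpos x y h)) α
    have h2 : 0 < (π y * L y x) ^ α :=
      Real.rpow_pos_of_pos (mul_pos (hπpos y) (hLpos y x h.symm)) α
    exact Real.rpow_pos_of_pos (by positivity) _
  -- pmean is a π-reversible generator
  have hgen : IsGen (pmean α π L) := by
    constructor
    · exact fun x y h => (hPpos x y h).le
    · intro x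
      exact rowZero_sum _ x
  have hrev : IsRev π (pmean α π L) := by
    refine ⟨hgen, fun x y => ?_⟩
    by_cases h : x = y
    · subst h; rfl
    · rw [hKP x y h, hKP y x (Ne.symm h), hKsymm]
  -- expansion of the divergence
  have hDf : ∀ N : X → X → ℝ, Df (falpha α) π L N
      = ∑ x, ∑ y ∈ Finset.univ.erase x, π x * (N x y * falpha α (L x y / N x y)) := by
    intro N
    unfold Df
    exact Finset.sum_congr rfl fun x _ => Finset.mul_sum _ _ _
  have hterm : ∀ (N : X → X → ℝ), ∀ x y : X, x ≠ y →
      π x * (N x y * falpha α (L x y / N x y))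
      = (π x * N x y) * falpha α ((π x * L x y) / (π x * N x y)) := by
    intro N x y _
    rw [mul_div_mul_left _ _ (hπpos x).ne']
    ring
  -- swapping double sums over off-diagonal pairs
  have hswap : ∀ (g : X → X → ℝ),
      ∑ x, ∑ y ∈ Finset.univ.erase x, g x y = ∑ x, ∑ y ∈ Finset.univ.erase x, g y x := by
    intro g
    refine Finset.sum_comm' ?_
    intro x y
    simp only [Finset.mem_univ, Finset.mem_erase, true_and, and_true]
    exact ⟨fun h => Ne.symm h, fun h => Ne.symm h⟩
  have hdouble : ∀ (u v : X → X → ℝ),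
      ∑ x, ∑ y ∈ Finset.univ.erase x, (u x y + u y x - (v x y + v y x))
      = 2 * ((∑ x, ∑ y ∈ Finset.univ.erase x, u x y)
          - ∑ x, ∑ y ∈ Finset.univ.erase x, v x y) := by
    intro u v
    have h1 := hswap u
    have h2 := hswap v
    simp only [Finset.sum_sub_distrib, Finset.sum_add_distrib]
    rw [← h1, ← h2]
    ring
  -- the pairwise key identity for a reversible M
  have hpair : ∀ (M : X → X → ℝ), IsRev π M → (∀ x y, x ≠ y → 0 < M x y) →
      ∀ x y : X, x ≠ y →
      (π x * (M x y * falpha α (L x y / M x y)) + π y * (M y x * falpha α (L y x / M y x)))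
        - (π x * (pmean α π L x y * falpha α (L x y / pmean α π L x y))
          + π y * (pmean α π L y x * falpha α (L y x / pmean α π L y x)))
      = 2 * ((((π x * L x y) ^ α + (π y * L y x) ^ α) / 2) ^ (1 / α))
          * falpha (1 - α) ((π x * M x y)
              / ((((π x * L x y) ^ α + (π y * L y x) ^ α) / 2) ^ (1 / α))) := by
    intro M hM hMpos x y h
    rw [hterm M x y h, hterm M y x h.symm, hterm (pmean α π L) x y h,
      hterm (pmean α π L) y x h.symm, hKP x y h, hKP y x h.symm, hKsymm y x,
      ← hM.2 x y]
    exact pair_id' hα0 hα1 (mul_pos (hπpos x) (hLpos x y h))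
      (mul_pos (hπpos y) (hLpos y x h.symm)) (mul_pos (hπpos x) (hMpos x y h))
  -- nonnegativity of the pair terms
  have hpt_nonneg : ∀ (M : X → X → ℝ), IsRev π M → (∀ x y, x ≠ y → 0 < M x y) →
      ∀ x y : X, x ≠ y →
      0 ≤ 2 * ((((π x * L x y) ^ α + (π y * L y x) ^ α) / 2) ^ (1 / α))
          * falpha (1 - α) ((π x * M x y)
              / ((((π x * L x y) ^ α + (π y * L y x) ^ α) / 2) ^ (1 / α))) := by
    intro M hM hMpos x y h
    have hK := hKpos x y h
    have hm := mul_pos (hπpos x) (hMpos x y h)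
    have := falpha_nonneg' hβ0 hβ1 (div_pos hm hK)
    positivity
  -- the main sum identity
  have hsum : ∀ (M : X → X → ℝ), IsRev π M → (∀ x y, x ≠ y → 0 < M x y) →
      ∑ x, ∑ y ∈ Finset.univ.erase x,
        (2 * ((((π x * L x y) ^ α + (π y * L y x) ^ α) / 2) ^ (1 / α))
          * falpha (1 - α) ((π x * M x y)
              / ((((π x * L x y) ^ α + (π y * L y x) ^ α) / 2) ^ (1 / α))))
      = 2 * (Df (falpha α) π L M - Df (falpha α) π L (pmean α π L)) := by
    intro M hM hMpos
    rw [hDf M, hDf (pmean α π L), ← hdouble]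
    refine Finset.sum_congr rfl fun x _ => Finset.sum_congr rfl fun y hy => ?_
    exact (hpair M hM hMpos x y (Finset.mem_erase.1 hy).1.symm).symm
  -- the inequality
  have hineq : ∀ M, IsRev π M → (∀ x y, x ≠ y → 0 < M x y) →
      Df (falpha α) π L (pmean α π L) ≤ Df (falpha α) π L M := by
    intro M hM hMpos
    have h0 : 0 ≤ 2 * (Df (falpha α) π L M - Df (falpha α) π L (pmean α π L)) := by
      rw [← hsum M hM hMpos]
      refine Finset.sum_nonneg fun x _ => Finset.sum_nonneg fun y hy => ?_
      exact hpt_nonneg M hM hMpos x y (Finset.mem_erase.1 hy).1.symm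
    linarith
  refine ⟨⟨hrev, hPpos⟩, hineq, ?_, hoff⟩
  -- uniqueness
  intro M hM hMpos
  constructor
  · intro heq
    have h0 : ∑ x, ∑ y ∈ Finset.univ.erase x,
        (2 * ((((π x * L x y) ^ α + (π y * L y x) ^ α) / 2) ^ (1 / α))
          * falpha (1 - α) ((π x * M x y)
              / ((((π x * L x y) ^ α + (π y * L y x) ^ α) / 2) ^ (1 / α)))) = 0 := by
      rw [hsum M hM hMpos, heq]; ring
    have hzero : ∀ x y : X, x ≠ y →
        2 * ((((π x * L x y) ^ α + (π y * L y x) ^ α) / 2) ^ (1 / α))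
          * falpha (1 - α) ((π x * M x y)
              / ((((π x * L x y) ^ α + (π y * L y x) ^ α) / 2) ^ (1 / α))) = 0 := by
      intro x y h
      have hx := (Finset.sum_eq_zero_iff_of_nonneg
        (fun x _ => Finset.sum_nonneg fun y hy =>
          hpt_nonneg M hM hMpos x y (Finset.mem_erase.1 hy).1.symm)).1 h0 x (Finset.mem_univ x)
      exact (Finset.sum_eq_zero_iff_of_nonneg
        (fun y hy => hpt_nonneg M hM hMpos x y (Finset.mem_erase.1 hy).1.symm)).1 hx y
        (Finset.mem_erase.2 ⟨Ne.symm h, Finset.mem_univ y⟩)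
    have hoffeq : ∀ x y : X, x ≠ y → M x y = pmean α π L x y := by
      intro x y h
      have hK := hKpos x y h
      have hm := mul_pos (hπpos x) (hMpos x y h)
      have hf : falpha (1 - α) ((π x * M x y)
          / ((((π x * L x y) ^ α + (π y * L y x) ^ α) / 2) ^ (1 / α))) = 0 := by
        have := hzero x y h
        have h2K : (2:ℝ) * ((((π x * L x y) ^ α + (π y * L y x) ^ α) / 2) ^ (1 / α)) ≠ 0 := by
          positivity
        exact (mul_eq_zero.1 this).resolve_left h2K
      have ht1 := falpha_eq_zero' hβ0 hβ1 (div_pos hm hK) hf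
      have hmK : π x * M x y = (((π x * L x y) ^ α + (π y * L y x) ^ α) / 2) ^ (1 / α) :=
        (div_eq_one_iff_eq hK.ne').1 ht1
      have : π x * M x y = π x * pmean α π L x y := by rw [hmK, hKP x y h]
      exact mul_left_cancel₀ (hπpos x).ne' this
    funext x y
    by_cases h : x = y
    · subst h
      have hMx : M x x = -(∑ z ∈ Finset.univ.erase x, M x z) := by
        have := hM.1.2 x
        rw [← Finset.add_sum_erase Finset.univ _ (Finset.mem_univ x)] at this
        linarith
      have hPx : pmean α π L x x = -(∑ z ∈ Finset.univ.erase x, pmean α π L x z) := by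
        have := hgen.2 x
        rw [← Finset.add_sum_erase Finset.univ _ (Finset.mem_univ x)] at this
        linarith
      rw [hMx, hPx]
      congr 1
      exact Finset.sum_congr rfl fun z hz => hoffeq x z (Finset.ne_of_mem_erase hz).symm
    · exact hoffeq x y h
  · intro h
    rw [h]

end
end

section
/- Parallelogram laws for the α-divergence: Let α ∈ ℝ∖{0,1}, α* = 1−α, and L ∈ ℒ⁺. Then for every M̄ ∈ ℒ⁺(π): D_α(L||M̄) + D_α(L_π||M̄) = 2·D_α(L||P_α(L)) + 2·D_α(P_α(L)||M̄), and D_α(M̄||L) + D_α(M̄||L_π) = 2·D_α(M̄||P_{α*}(L)) + 2·D_α(P_{α*}(L)||L). -/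
open Finset

noncomputable section

variable {X : Type*} [Fintype X] [DecidableEq X]

lemma sum_erase_swap (G : X → X → ℝ) :
    ∑ x, ∑ y ∈ Finset.univ.erase x, G x y = ∑ x, ∑ y ∈ Finset.univ.erase x, G y x := by
  have h : ∀ G : X → X → ℝ, (∑ x, ∑ y ∈ Finset.univ.erase x, G x y)
      = ∑ x : X, ∑ y : X, if y = x then 0 else G x y := by
    intro G
    refine Finset.sum_congr rfl fun x _ => ?_
    rw [← Finset.sum_erase (Finset.univ) (f := fun y => if y = x then 0 else G x y) (if_pos rfl)]
    exact Finset.sum_congr rfl fun y hy => (if_neg (Finset.mem_erase.1 hy).1).symm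
  rw [h, h, Finset.sum_comm]
  refine Finset.sum_congr rfl fun x _ => Finset.sum_congr rfl fun y _ => ?_
  by_cases hxy : x = y <;> simp [hxy, eq_comm]

lemma falpha_mul {α m n : ℝ} (hα0 : α ≠ 0) (hα1 : α ≠ 1) (hm : 0 < m) (hn : 0 < n) :
    n * falpha α (m / n) = (m ^ α * n ^ (1 - α) - α * m - (1 - α) * n) / (α * (α - 1)) := by
  have hc : α * (α - 1) ≠ 0 := mul_ne_zero hα0 (sub_ne_zero.2 hα1)
  have h1 : (m / n) ^ α = m ^ α / n ^ α := Real.div_rpow hm.le hn.le α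
  have h2 : n ^ (1 - α) = n / n ^ α := by
    rw [Real.rpow_sub hn, Real.rpow_one]
  have hnα : n ^ α ≠ 0 := (Real.rpow_pos_of_pos hn α).ne'
  unfold falpha
  rw [h1, h2]
  field_simp

lemma cross_rpow {px py a b s t β γ : ℝ} (hpx : 0 < px) (hpy : 0 < py)
    (ha : 0 < a) (hb : 0 < b) (hs : 0 < s) (ht : 0 < t)
    (e1 : py * s = px * a) (e2 : py * t = px * b) (hβγ : β + γ = 1) :
    py * (s ^ β * t ^ γ) = px * (a ^ β * b ^ γ) := by
  have h1 : ∀ p u v : ℝ, 0 < p → 0 < u → 0 < v →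
      (p * u) ^ β * (p * v) ^ γ = p * (u ^ β * v ^ γ) := by
    intro p u v hp hu hv
    rw [Real.mul_rpow hp.le hu.le, Real.mul_rpow hp.le hv.le]
    have : p ^ β * p ^ γ = p := by
      rw [← Real.rpow_add hp, hβγ, Real.rpow_one]
    calc p ^ β * u ^ β * (p ^ γ * v ^ γ) = (p ^ β * p ^ γ) * (u ^ β * v ^ γ) := by ring
      _ = p * (u ^ β * v ^ γ) := by rw [this]
  rw [← h1 py s t hpy hs ht, e1, e2, h1 px a b hpx ha hb]

lemma dual_apply (π : X → ℝ) (L : X → X → ℝ) {x y : X} (h : x ≠ y) :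
    dual π L x y = π y * L y x / π x := by
  simp [dual, rowZero, h]

lemma dual_pos {π : X → ℝ} (hπ : ∀ x, 0 < π x) {L : X → X → ℝ}
    (hL : ∀ x y, x ≠ y → 0 < L x y) {x y : X} (h : x ≠ y) : 0 < dual π L x y := by
  rw [dual_apply π L h]
  exact div_pos (mul_pos (hπ y) (hL y x h.symm)) (hπ x)

lemma pmean_apply {π : X → ℝ} (hπ : ∀ x, 0 < π x) {L : X → X → ℝ}
    (hL : ∀ x y, x ≠ y → 0 < L x y) (p : ℝ) {x y : X} (h : x ≠ y) :
    pmean p π L x y = ((L x y ^ p + dual π L x y ^ p) / 2) ^ (1 / p) := by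
  have hpos : L x y * dual π L x y ≠ 0 :=
    (mul_pos (hL x y h) (dual_pos hπ hL h)).ne'
  simp [pmean, rowZero, h, hpos]

lemma pmean_pos {π : X → ℝ} (hπ : ∀ x, 0 < π x) {L : X → X → ℝ}
    (hL : ∀ x y, x ≠ y → 0 < L x y) (p : ℝ) {x y : X} (h : x ≠ y) :
    0 < pmean p π L x y := by
  rw [pmean_apply hπ hL p h]
  apply Real.rpow_pos_of_pos
  have h1 := Real.rpow_pos_of_pos (hL x y h) p
  have h2 := Real.rpow_pos_of_pos (dual_pos hπ hL h) p
  linarith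

lemma pmean_rpow_self {π : X → ℝ} (hπ : ∀ x, 0 < π x) {L : X → X → ℝ}
    (hL : ∀ x y, x ≠ y → 0 < L x y) {p : ℝ} (hp : p ≠ 0) {x y : X} (h : x ≠ y) :
    pmean p π L x y ^ p = (L x y ^ p + dual π L x y ^ p) / 2 := by
  have h1 := Real.rpow_pos_of_pos (hL x y h) p
  have h2 := Real.rpow_pos_of_pos (dual_pos hπ hL h) p
  have hb : (0:ℝ) < (L x y ^ p + dual π L x y ^ p) / 2 := by linarith
  rw [pmean_apply hπ hL p h, ← Real.rpow_mul hb.le, one_div, inv_mul_cancel₀ hp,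
    Real.rpow_one]

lemma pmean_rev {π : X → ℝ} (hπ : ∀ x, 0 < π x) {L : X → X → ℝ}
    (hL : ∀ x y, x ≠ y → 0 < L x y) {p : ℝ} (hp : p ≠ 0) {x y : X} (hxy : x ≠ y) :
    π x * pmean p π L x y = π y * pmean p π L y x := by
  have key : ∀ u v : X, u ≠ v → π u * pmean p π L u v
      = (((π u * L u v) ^ p + (π v * L v u) ^ p) / 2) ^ (1 / p) := by
    intro u v huv
    have hπu := hπ u
    have hLuv := hL u v huv
    have hduv := dual_pos hπ hL huv
    have hb : (0:ℝ) < (L u v ^ p + dual π L u v ^ p) / 2 := by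
      have h1 := Real.rpow_pos_of_pos hLuv p
      have h2 := Real.rpow_pos_of_pos hduv p
      linarith
    have hπd : π u * dual π L u v = π v * L v u := by
      rw [dual_apply π L huv]
      field_simp
    have hπu_eq : π u = (π u ^ p) ^ (1 / p) := by
      rw [← Real.rpow_mul hπu.le, mul_one_div_cancel hp, Real.rpow_one]
    rw [pmean_apply hπ hL p huv]
    calc π u * ((L u v ^ p + dual π L u v ^ p) / 2) ^ (1 / p)
        = (π u ^ p * ((L u v ^ p + dual π L u v ^ p) / 2)) ^ (1 / p) := by
          rw [Real.mul_rpow (Real.rpow_pos_of_pos hπu p).le hb.le, ← hπu_eq]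
      _ = (((π u * L u v) ^ p + (π u * dual π L u v) ^ p) / 2) ^ (1 / p) := by
          rw [Real.mul_rpow hπu.le hLuv.le, Real.mul_rpow hπu.le hduv.le]
          ring_nf
      _ = (((π u * L u v) ^ p + (π v * L v u) ^ p) / 2) ^ (1 / p) := by rw [hπd]
  rw [key x y hxy, key y x hxy.symm, add_comm ((π y * L y x) ^ p)]

lemma Df_eq (π : X → ℝ) {α : ℝ} (hα0 : α ≠ 0) (hα1 : α ≠ 1)
    (M N : X → X → ℝ) (hM : ∀ x y, x ≠ y → 0 < M x y) (hN : ∀ x y, x ≠ y → 0 < N x y) :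
    Df (falpha α) π M N =
      ((∑ x, ∑ y ∈ Finset.univ.erase x, π x * (M x y ^ α * N x y ^ (1 - α)))
        - α * (∑ x, ∑ y ∈ Finset.univ.erase x, π x * M x y)
        - (1 - α) * (∑ x, ∑ y ∈ Finset.univ.erase x, π x * N x y)) / (α * (α - 1)) := by
  unfold Df
  calc ∑ x, π x * ∑ y ∈ Finset.univ.erase x, N x y * falpha α (M x y / N x y)
      = ∑ x, ∑ y ∈ Finset.univ.erase x,
          π x * ((M x y ^ α * N x y ^ (1 - α) - α * M x y - (1 - α) * N x y)
            / (α * (α - 1))) := by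
        refine Finset.sum_congr rfl fun x _ => ?_
        rw [Finset.mul_sum]
        refine Finset.sum_congr rfl fun y hy => ?_
        have hxy : x ≠ y := fun h => (Finset.mem_erase.1 hy).1 h.symm
        rw [falpha_mul hα0 hα1 (hM x y hxy) (hN x y hxy)]
    _ = (∑ x, ∑ y ∈ Finset.univ.erase x,
          π x * (M x y ^ α * N x y ^ (1 - α) - α * M x y - (1 - α) * N x y))
            / (α * (α - 1)) := by
        rw [Finset.sum_div]
        exact Finset.sum_congr rfl fun x _ => by
          rw [Finset.sum_div]
          exact Finset.sum_congr rfl fun y _ => (mul_div_assoc _ _ _).symm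
    _ = _ := by
        congr 1
        simp only [Finset.mul_sum, ← Finset.sum_sub_distrib]
        exact Finset.sum_congr rfl fun x _ => Finset.sum_congr rfl fun y _ => by ring

/-- **Parallelogram laws for the `α`-divergence** (Theorem 3.3(5)):
for `L ∈ ℒ⁺` and every `M̄ ∈ ℒ⁺(π)`,
`D_α(L‖M̄) + D_α(L_π‖M̄) = 2·D_α(L‖P_α(L)) + 2·D_α(P_α(L)‖M̄)` and
`D_α(M̄‖L) + D_α(M̄‖L_π) = 2·D_α(M̄‖P_{α*}(L)) + 2·D_α(P_{α*}(L)‖L)`. -/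
theorem alpha_parallelogram (π : X → ℝ) (hπ : IsProb π)
    (α : ℝ) (hα0 : α ≠ 0) (hα1 : α ≠ 1)
    (L : X → X → ℝ) (hL : IsGen L) (hLpos : ∀ x y, x ≠ y → 0 < L x y)
    (Mbar : X → X → ℝ) (hMbar : IsRev π Mbar)
    (hMbarpos : ∀ x y, x ≠ y → 0 < Mbar x y) :
    Df (falpha α) π L Mbar + Df (falpha α) π (dual π L) Mbar =
      2 * Df (falpha α) π L (pmean α π L) +
        2 * Df (falpha α) π (pmean α π L) Mbar ∧
    Df (falpha α) π Mbar L + Df (falpha α) π Mbar (dual π L) =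
      2 * Df (falpha α) π Mbar (pmean (1 - α) π L) +
        2 * Df (falpha α) π (pmean (1 - α) π L) L := by
  have hπp := hπ.1
  have h1α : (1:ℝ) - α ≠ 0 := sub_ne_zero.2 fun h => hα1 h.symm
  have hdpos : ∀ x y : X, x ≠ y → 0 < dual π L x y := fun x y h => dual_pos hπp hLpos h
  have hPpos : ∀ x y : X, x ≠ y → 0 < pmean α π L x y :=
    fun x y h => pmean_pos hπp hLpos α h
  have hQpos : ∀ x y : X, x ≠ y → 0 < pmean (1 - α) π L x y :=
    fun x y h => pmean_pos hπp hLpos (1 - α) h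
  -- total-flow identity  S(πL) = S(πL_π)
  have hA : (∑ x, ∑ y ∈ Finset.univ.erase x, π x * L x y)
      = ∑ x, ∑ y ∈ Finset.univ.erase x, π x * dual π L x y := by
    rw [sum_erase_swap (fun x y => π x * L x y)]
    refine Finset.sum_congr rfl fun x _ => Finset.sum_congr rfl fun y hy => ?_
    have hxy : x ≠ y := fun h => (Finset.mem_erase.1 hy).1 h.symm
    rw [dual_apply π L hxy]
    field_simp [(hπp x).ne']
  -- S(π L^α P^(1-α)) = S(π P)  for  P = P_α
  have hC : (∑ x, ∑ y ∈ Finset.univ.erase x,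
        π x * (L x y ^ α * pmean α π L x y ^ (1 - α)))
      = ∑ x, ∑ y ∈ Finset.univ.erase x, π x * pmean α π L x y := by
    have hswap : (∑ x, ∑ y ∈ Finset.univ.erase x,
          π x * (L x y ^ α * pmean α π L x y ^ (1 - α)))
        = ∑ x, ∑ y ∈ Finset.univ.erase x,
            π x * (dual π L x y ^ α * pmean α π L x y ^ (1 - α)) := by
      rw [sum_erase_swap (fun x y => π x * (L x y ^ α * pmean α π L x y ^ (1 - α)))]
      refine Finset.sum_congr rfl fun x _ => Finset.sum_congr rfl fun y hy => ?_
      have hxy : x ≠ y := fun h => (Finset.mem_erase.1 hy).1 h.symm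
      have e1 : π y * L y x = π x * dual π L x y := by
        rw [dual_apply π L hxy]
        field_simp [(hπp x).ne']
      exact cross_rpow (hπp x) (hπp y) (hdpos x y hxy) (hPpos x y hxy)
        (hLpos y x hxy.symm) (hPpos y x hxy.symm) e1
        (pmean_rev hπp hLpos hα0 hxy).symm (by ring)
    have hdbl : (∑ x, ∑ y ∈ Finset.univ.erase x,
          π x * (L x y ^ α * pmean α π L x y ^ (1 - α)))
        + (∑ x, ∑ y ∈ Finset.univ.erase x,
            π x * (dual π L x y ^ α * pmean α π L x y ^ (1 - α)))
        = 2 * ∑ x, ∑ y ∈ Finset.univ.erase x, π x * pmean α π L x y := by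
      simp only [Finset.mul_sum, ← Finset.sum_add_distrib]
      refine Finset.sum_congr rfl fun x _ => Finset.sum_congr rfl fun y hy => ?_
      have hxy : x ≠ y := fun h => (Finset.mem_erase.1 hy).1 h.symm
      have hPα := pmean_rpow_self hπp hLpos hα0 hxy
      have hPP : pmean α π L x y ^ α * pmean α π L x y ^ (1 - α)
          = pmean α π L x y := by
        rw [← Real.rpow_add (hPpos x y hxy)]; norm_num
      have h2 : L x y ^ α + dual π L x y ^ α = 2 * pmean α π L x y ^ α := by
        rw [hPα]; ring
      calc π x * (L x y ^ α * pmean α π L x y ^ (1 - α))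
            + π x * (dual π L x y ^ α * pmean α π L x y ^ (1 - α))
          = π x * ((L x y ^ α + dual π L x y ^ α) * pmean α π L x y ^ (1 - α)) := by
            ring
        _ = π x * (2 * (pmean α π L x y ^ α * pmean α π L x y ^ (1 - α))) := by
            rw [h2]; ring
        _ = 2 * (π x * pmean α π L x y) := by rw [hPP]; ring
    linarith [hswap, hdbl]
  -- S(π L^α M^(1-α)) + S(π L_π^α M^(1-α)) = 2 S(π P^α M^(1-α))
  have hE : (∑ x, ∑ y ∈ Finset.univ.erase x, π x * (L x y ^ α * Mbar x y ^ (1 - α)))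
      + (∑ x, ∑ y ∈ Finset.univ.erase x,
          π x * (dual π L x y ^ α * Mbar x y ^ (1 - α)))
      = 2 * ∑ x, ∑ y ∈ Finset.univ.erase x,
          π x * (pmean α π L x y ^ α * Mbar x y ^ (1 - α)) := by
    simp only [Finset.mul_sum, ← Finset.sum_add_distrib]
    refine Finset.sum_congr rfl fun x _ => Finset.sum_congr rfl fun y hy => ?_
    have hxy : x ≠ y := fun h => (Finset.mem_erase.1 hy).1 h.symm
    rw [pmean_rpow_self hπp hLpos hα0 hxy]
    ring
  -- S(π Q^α L^(1-α)) = S(π Q)  for  Q = P_{1-α}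
  have hCQ : (∑ x, ∑ y ∈ Finset.univ.erase x,
        π x * (pmean (1 - α) π L x y ^ α * L x y ^ (1 - α)))
      = ∑ x, ∑ y ∈ Finset.univ.erase x, π x * pmean (1 - α) π L x y := by
    have hswap : (∑ x, ∑ y ∈ Finset.univ.erase x,
          π x * (pmean (1 - α) π L x y ^ α * L x y ^ (1 - α)))
        = ∑ x, ∑ y ∈ Finset.univ.erase x,
            π x * (pmean (1 - α) π L x y ^ α * dual π L x y ^ (1 - α)) := by
      rw [sum_erase_swap
        (fun x y => π x * (pmean (1 - α) π L x y ^ α * L x y ^ (1 - α)))]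
      refine Finset.sum_congr rfl fun x _ => Finset.sum_congr rfl fun y hy => ?_
      have hxy : x ≠ y := fun h => (Finset.mem_erase.1 hy).1 h.symm
      have e2 : π y * L y x = π x * dual π L x y := by
        rw [dual_apply π L hxy]
        field_simp [(hπp x).ne']
      exact cross_rpow (hπp x) (hπp y) (hQpos x y hxy) (hdpos x y hxy)
        (hQpos y x hxy.symm) (hLpos y x hxy.symm)
        (pmean_rev hπp hLpos h1α hxy).symm e2 (by ring)
    have hdbl : (∑ x, ∑ y ∈ Finset.univ.erase x,
          π x * (pmean (1 - α) π L x y ^ α * L x y ^ (1 - α)))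
        + (∑ x, ∑ y ∈ Finset.univ.erase x,
            π x * (pmean (1 - α) π L x y ^ α * dual π L x y ^ (1 - α)))
        = 2 * ∑ x, ∑ y ∈ Finset.univ.erase x, π x * pmean (1 - α) π L x y := by
      simp only [Finset.mul_sum, ← Finset.sum_add_distrib]
      refine Finset.sum_congr rfl fun x _ => Finset.sum_congr rfl fun y hy => ?_
      have hxy : x ≠ y := fun h => (Finset.mem_erase.1 hy).1 h.symm
      have hQ1α := pmean_rpow_self hπp hLpos h1α hxy
      have hQQ : pmean (1 - α) π L x y ^ α * pmean (1 - α) π L x y ^ (1 - α)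
          = pmean (1 - α) π L x y := by
        rw [← Real.rpow_add (hQpos x y hxy)]; norm_num
      have h2 : L x y ^ (1 - α) + dual π L x y ^ (1 - α)
          = 2 * pmean (1 - α) π L x y ^ (1 - α) := by rw [hQ1α]; ring
      calc π x * (pmean (1 - α) π L x y ^ α * L x y ^ (1 - α))
            + π x * (pmean (1 - α) π L x y ^ α * dual π L x y ^ (1 - α))
          = π x * (pmean (1 - α) π L x y ^ α
              * (L x y ^ (1 - α) + dual π L x y ^ (1 - α))) := by ring
        _ = π x * (2 * (pmean (1 - α) π L x y ^ α
              * pmean (1 - α) π L x y ^ (1 - α))) := by rw [h2]; ring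
        _ = 2 * (π x * pmean (1 - α) π L x y) := by rw [hQQ]; ring
    linarith [hswap, hdbl]
  -- S(π M^α L^(1-α)) + S(π M^α L_π^(1-α)) = 2 S(π M^α Q^(1-α))
  have hFQ : (∑ x, ∑ y ∈ Finset.univ.erase x,
        π x * (Mbar x y ^ α * L x y ^ (1 - α)))
      + (∑ x, ∑ y ∈ Finset.univ.erase x,
          π x * (Mbar x y ^ α * dual π L x y ^ (1 - α)))
      = 2 * ∑ x, ∑ y ∈ Finset.univ.erase x,
          π x * (Mbar x y ^ α * pmean (1 - α) π L x y ^ (1 - α)) := by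
    simp only [Finset.mul_sum, ← Finset.sum_add_distrib]
    refine Finset.sum_congr rfl fun x _ => Finset.sum_congr rfl fun y hy => ?_
    have hxy : x ≠ y := fun h => (Finset.mem_erase.1 hy).1 h.symm
    rw [pmean_rpow_self hπp hLpos h1α hxy]
    ring
  constructor
  · rw [Df_eq π hα0 hα1 L Mbar hLpos hMbarpos,
      Df_eq π hα0 hα1 (dual π L) Mbar hdpos hMbarpos,
      Df_eq π hα0 hα1 L (pmean α π L) hLpos hPpos,
      Df_eq π hα0 hα1 (pmean α π L) Mbar hPpos hMbarpos]
    linear_combination (hE + α * hA - 2 * hC) / (α * (α - 1))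
  · rw [Df_eq π hα0 hα1 Mbar L hMbarpos hLpos,
      Df_eq π hα0 hα1 Mbar (dual π L) hMbarpos hdpos,
      Df_eq π hα0 hα1 Mbar (pmean (1 - α) π L) hMbarpos hQpos,
      Df_eq π hα0 hα1 (pmean (1 - α) π L) L hQpos hLpos]
    linear_combination (hFQ + (1 - α) * hA - 2 * hCQ) / (α * (α - 1))

end
end
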